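/- arXiv:2602.12175 — 2 statements merged into one kernel-verified Lean document; each statement's English description precedes it below -/
import Mathlib

section
/- For every demand t of the single-item lot-sizing instance, the set of order times O produced by the offline primal-dual algorithm intersects the demand's interval I^d_t = {s' ∈ [T] : H^t_{s'} ≤ b^end_t}; that is, I^d_t ∩ O ≠ ∅, so every demand can be served at an order time whose holding-delay cost is at most its final dual value. -/
open scoped Classical
open Finset

/-- An instance of single-item lot-sizing with holding-delay costs: timesteps
`1,…,T`, ordering cost `K ≥ 0`, a finite set `D ⊆ [T]` of demands (identified with
their desired service times), and for each demand `t` a nonnegative holding-delay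
cost function `H t` with `H t t = 0`, non-increasing before `t` (holding) and
non-decreasing after `t` (delay). -/
structure LotSizing where
  T : ℕ
  K : ℝ
  K_nonneg : 0 ≤ K
  D : Finset ℕ
  D_sub : D ⊆ Finset.Icc 1 T
  H : ℕ → ℕ → ℝ
  H_nonneg : ∀ t s, 0 ≤ H t s
  H_self : ∀ t ∈ D, H t t = 0
  H_dec : ∀ t ∈ D, ∀ s s' : ℕ, s ≤ s' → s' ≤ t → H t s' ≤ H t s
  H_inc : ∀ t ∈ D, ∀ s s' : ℕ, t ≤ s → s ≤ s' → H t s ≤ H t s'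

/-- The final state of the offline primal-dual wavefront algorithm for single-item
lot-sizing.  `bEnd t` is the final (frozen) dual value of demand `t`, `z t s` the
final value of the dual variable `z^t_s`, `freezeTime t` the wavefront value at
which demand `t` froze, `freezeCons t` the tight constraint that caused it to
freeze, `tight` the set of timesteps whose constraint `∑_t z^t_s ≤ K` became
tight, `sfreeze s` the wavefront value at which constraint `s` became tight
(so `I_s = (s, sfreeze s]`), and `O` the greedily chosen set of order times. -/
structure OfflineRun (I : LotSizing) where
  bEnd : ℕ → ℝ
  z : ℕ → ℕ → ℝ
  freezeTime : ℕ → ℕ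
  freezeCons : ℕ → ℕ
  tight : Finset ℕ
  sfreeze : ℕ → ℕ
  O : Finset ℕ
  /-- duals are nonnegative -/
  b_nonneg : ∀ t ∈ I.D, 0 ≤ bEnd t
  /-- while active, `b_t = 1_{τ ≥ t}·H^t_τ`; it freezes at wavefront `freezeTime t` -/
  b_eq : ∀ t ∈ I.D, bEnd t = if t ≤ freezeTime t then I.H t (freezeTime t) else 0
  /-- `z^t_s = (b_t − H^t_s)⁺` -/
  z_def : ∀ t ∈ I.D, ∀ s, z t s = max (bEnd t - I.H t s) 0
  /-- dual feasibility: `∑_{t∈D} z^t_s ≤ K` -/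
  dual_feas : ∀ s ∈ Finset.Icc 1 I.T, ∑ t ∈ I.D, z t s ≤ I.K
  tight_sub : tight ⊆ Finset.Icc 1 I.T
  /-- tight constraints are exactly at value `K` -/
  tight_eq : ∀ s ∈ tight, ∑ t ∈ I.D, z t s = I.K
  /-- a constraint becomes tight strictly after its own timestep -/
  sfreeze_gt : ∀ s ∈ tight, s < sfreeze s
  /-- each demand froze because of some tight constraint … -/
  freezeCons_tight : ∀ t ∈ I.D, freezeCons t ∈ tight
  /-- … to which its dual contributed: `bEnd t − z^t_{freezeCons t} = H^t_{freezeCons t}` -/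
  freezeCons_reached : ∀ t ∈ I.D, I.H t (freezeCons t) ≤ bEnd t
  /-- a demand freezes no earlier than the wavefront moment its constraint became tight -/
  freeze_after : ∀ t ∈ I.D, sfreeze (freezeCons t) ≤ freezeTime t
  /-- the greedy order set consists of tight timesteps … -/
  O_sub : O ⊆ tight
  /-- … with pairwise disjoint intervals `I_s = (s, sfreeze s]` … -/
  O_disj : ∀ s₁ ∈ O, ∀ s₂ ∈ O, s₁ ≠ s₂ →
    Disjoint (Set.Ioc s₁ (sfreeze s₁)) (Set.Ioc s₂ (sfreeze s₂))
  /-- … chosen greedily from the largest: any tight `s ∉ O` has its interval met by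
  the interval of some larger `s' ∈ O`. -/
  O_max : ∀ s ∈ tight, s ∉ O → ∃ s' ∈ O, s < s' ∧
    (Set.Ioc s (sfreeze s) ∩ Set.Ioc s' (sfreeze s')).Nonempty

/-- For every demand `t`, the set of order times `O` produced by
the offline primal-dual algorithm intersects the demand's interval
`I^d_t = {s' ∈ [T] : H^t_{s'} ≤ bEnd t}`; hence every demand can be served at an
order time whose holding-delay cost is at most its final dual value. -/
theorem offline_intervals_hit_orders (I : LotSizing) (r : OfflineRun I)
    (t : ℕ) (ht : t ∈ I.D) :
    (((Finset.Icc 1 I.T).filter (fun s' => I.H t s' ≤ r.bEnd t)) ∩ r.O).Nonempty := by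
  set c := r.freezeCons t with hc
  have hct : c ∈ r.tight := r.freezeCons_tight t ht
  have hcIcc : c ∈ Finset.Icc 1 I.T := r.tight_sub hct
  have hHc : I.H t c ≤ r.bEnd t := r.freezeCons_reached t ht
  by_cases hcO : c ∈ r.O
  · exact ⟨c, Finset.mem_inter.2 ⟨Finset.mem_filter.2 ⟨hcIcc, hHc⟩, hcO⟩⟩
  · obtain ⟨s', hs'O, hlt, x, hx1, hx2⟩ := r.O_max c hct hcO
    have hs'Icc : s' ∈ Finset.Icc 1 I.T := r.tight_sub (r.O_sub hs'O)
    have hs'le : s' < r.sfreeze c := lt_of_lt_of_le hx2.1 hx1.2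
    have hfc : r.sfreeze c ≤ r.freezeTime t := r.freeze_after t ht
    have hH : I.H t s' ≤ r.bEnd t := by
      rcases le_total s' t with h | h
      · exact le_trans (I.H_dec t ht c s' (le_of_lt hlt) h) hHc
      · have htf : t ≤ r.freezeTime t :=
          le_trans h (le_trans (le_of_lt hs'le) hfc)
        have : r.bEnd t = I.H t (r.freezeTime t) := by
          rw [r.b_eq t ht, if_pos htf]
        rw [this]
        exact I.H_inc t ht s' (r.freezeTime t) h
          (le_trans (le_of_lt hs'le) hfc)
    exact ⟨s', Finset.mem_inter.2 ⟨Finset.mem_filter.2 ⟨hs'Icc, hH⟩, hs'O⟩⟩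
end

section
/- Given a set cover instance with elements u_1,...,u_n and sets S_1,...,S_m, construct a single-item lot-sizing instance with m+n timesteps, ordering cost 1, and for each i ∈ [n] a demand with desired service time m+i whose holding-delay cost is H^{m+i}_k = 0 if k ≤ m and u_i ∈ S_k, H^{m+i}_k = 0 if k = m+i, and H^{m+i}_k = ∞ otherwise. Then the optimal value of this lot-sizing instance equals the minimum size of a set cover, and any feasible lot-sizing solution of finite cost C can be converted into a set cover of size at most C; consequently, an α-approximation algorithm for single-item lot-sizing with non-monotone holding-delay costs yields an α-approximation algorithm for set cover. -/
open scoped Classical ENNReal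
open Finset

/-- The holding-delay cost function of the single-item lot-sizing instance built
from a set cover instance with elements `u_1,…,u_n` and sets `S_1,…,S_m`: there
are `m + n` timesteps, the demand of element `i` has desired service time
`m + 1 + i` (the `(i+1)`-st timestep after `m`), cost `0` at a timestep `k ≤ m`
exactly when `u_i ∈ S_k`, cost `0` at its own service time, and `∞` otherwise. -/
noncomputable def scH (n m : ℕ) (sets : Fin m → Finset (Fin n))
    (i : Fin n) (k : ℕ) : ℝ≥0∞ :=
  if (∃ j : Fin m, (j : ℕ) + 1 = k ∧ i ∈ sets j) ∨ k = m + 1 + (i : ℕ) then 0 else ⊤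

/-- The cost of a single-item lot-sizing solution for the instance built from a
set cover instance: ordering cost `1` per order plus the holding-delay costs. -/
noncomputable def scLotCost (n m : ℕ) (sets : Fin m → Finset (Fin n))
    (O : Finset ℕ) (serve : Fin n → ℕ) : ℝ≥0∞ :=
  (O.card : ℝ≥0∞) + ∑ i : Fin n, scH n m sets i (serve i)

lemma scPartA (n m : ℕ) (sets : Fin m → Finset (Fin n))
    (hcov : ∀ i : Fin n, ∃ j : Fin m, i ∈ sets j)
    (O : Finset ℕ) (serve : Fin n → ℕ)
    (hfe : ∀ i, serve i ∈ O) :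
    ∃ F : Finset (Fin m), (∀ i : Fin n, ∃ j ∈ F, i ∈ sets j) ∧
      (F.card : ℝ≥0∞) ≤ scLotCost n m sets O serve := by
  by_cases h : ∀ i : Fin n,
      (∃ j : Fin m, (j : ℕ) + 1 = serve i ∧ i ∈ sets j) ∨ serve i = m + 1 + (i : ℕ)
  · -- all costs are 0
    set f : Fin n → Fin m := fun i =>
      if h1 : ∃ j : Fin m, (j : ℕ) + 1 = serve i ∧ i ∈ sets j then h1.choose
      else (hcov i).choose with hf
    refine ⟨Finset.image f Finset.univ, ?_, ?_⟩
    · intro i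
      refine ⟨f i, Finset.mem_image_of_mem f (Finset.mem_univ i), ?_⟩
      by_cases h1 : ∃ j : Fin m, (j : ℕ) + 1 = serve i ∧ i ∈ sets j
      · simp only [hf, dif_pos h1]; exact h1.choose_spec.2
      · simp only [hf, dif_neg h1]; exact (hcov i).choose_spec
    · have hle : (Finset.image f Finset.univ).card ≤ O.card := by
        rcases Nat.eq_zero_or_pos n with hn | hn
        · have : (Finset.univ : Finset (Fin n)) = ∅ := by
            subst hn; rfl
          simp [this]
        · set g : ℕ → Fin m := fun k =>
            if h1 : ∃ j : Fin m, (j : ℕ) + 1 = k then h1.choose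
            else if h2 : ∃ i : Fin n, k = m + 1 + (i : ℕ) then f h2.choose
            else f ⟨0, hn⟩ with hg
          apply Finset.card_le_card_of_surjOn g
          intro j hj
          simp only [Finset.coe_image, Finset.coe_univ, Set.image_univ,
            Set.mem_range] at hj
          obtain ⟨i, rfl⟩ := hj
          refine ⟨serve i, hfe i, ?_⟩
          rcases h i with h1 | h2
          · have h1' : ∃ j : Fin m, (j : ℕ) + 1 = serve i := ⟨h1.choose, h1.choose_spec.1⟩
            have : g (serve i) = h1'.choose := by simp only [hg, dif_pos h1']
            rw [this, hf]
            simp only [dif_pos h1]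
            have e1 : ((h1'.choose : ℕ) : ℕ) + 1 = serve i := h1'.choose_spec
            have e2 : ((h1.choose : ℕ) : ℕ) + 1 = serve i := h1.choose_spec.1
            exact Fin.val_injective (Nat.succ_injective (e1.trans e2.symm))
          · have h1' : ¬ ∃ j : Fin m, (j : ℕ) + 1 = serve i := by
              rintro ⟨j, hj⟩
              have : (j : ℕ) + 1 ≤ m := j.isLt
              omega
            have h2' : ∃ i' : Fin n, serve i = m + 1 + (i' : ℕ) := ⟨i, h2⟩
            have : g (serve i) = f h2'.choose := by
              simp only [hg, dif_neg h1', dif_pos h2']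
            rw [this]
            congr 1
            have := h2'.choose_spec
            exact Fin.val_injective (by omega)
      calc ((Finset.image f Finset.univ).card : ℝ≥0∞) ≤ (O.card : ℝ≥0∞) := by
            exact_mod_cast hle
        _ ≤ scLotCost n m sets O serve := le_self_add
  · push_neg at h
    obtain ⟨i, hi⟩ := h
    refine ⟨Finset.univ, fun i' => ⟨(hcov i').choose, Finset.mem_univ _, (hcov i').choose_spec⟩, ?_⟩
    have : scLotCost n m sets O serve = ⊤ := by
      have hsum : ∑ i' : Fin n, scH n m sets i' (serve i') = ⊤ := by
        apply ENNReal.sum_eq_top.mpr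
        refine ⟨i, Finset.mem_univ i, ?_⟩
        rw [scH, if_neg]
        push_neg
        exact ⟨hi.1, hi.2⟩
      simp [scLotCost, hsum]
    simp [this]

lemma scPartB (n m : ℕ) (sets : Fin m → Finset (Fin n))
    (F : Finset (Fin m)) (hF : ∀ i : Fin n, ∃ j ∈ F, i ∈ sets j) :
    ∃ (O : Finset ℕ) (serve : Fin n → ℕ), O ⊆ Finset.Icc 1 (m + n) ∧
      (∀ i, serve i ∈ O) ∧ scLotCost n m sets O serve ≤ (F.card : ℝ≥0∞) := by
  classical
  set serve : Fin n → ℕ := fun i => ((hF i).choose : ℕ) + 1 with hs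
  refine ⟨F.image (fun j : Fin m => (j : ℕ) + 1), serve, ?_, ?_, ?_⟩
  · intro k hk
    simp only [Finset.mem_image] at hk
    obtain ⟨j, _, rfl⟩ := hk
    have := j.isLt
    simp only [Finset.mem_Icc]; omega
  · intro i
    exact Finset.mem_image_of_mem _ (hF i).choose_spec.1
  · have hcard : (F.image (fun j : Fin m => (j : ℕ) + 1)).card = F.card :=
      Finset.card_image_of_injective _ (fun a b hab => by
        exact Fin.val_injective (Nat.succ_injective hab))
    have hsum : ∑ i : Fin n, scH n m sets i (serve i) = 0 := by
      apply Finset.sum_eq_zero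
      intro i _
      have : ∃ j : Fin m, (j : ℕ) + 1 = serve i ∧ i ∈ sets j :=
        ⟨(hF i).choose, rfl, (hF i).choose_spec.2⟩
      simp [scH, this]
    simp [scLotCost, hsum, hcard]

/-- For the single-item lot-sizing instance (with non-monotone
holding-delay costs) built from a set cover instance: (a) every feasible
lot-sizing solution can be converted into a set cover whose size is at most the
solution's cost (so any finite-cost solution of cost `C` yields a cover of size
`≤ C`); (b) every set cover yields a feasible lot-sizing solution of no greater
cost; and (c) the optimal values of the two instances coincide.  Consequently an
`α`-approximation algorithm for single-item lot-sizing with non-monotone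
holding-delay costs yields an `α`-approximation algorithm for set cover. -/
theorem lot_sizing_generalizes_set_cover (n m : ℕ)
    (sets : Fin m → Finset (Fin n))
    (hcov : ∀ i : Fin n, ∃ j : Fin m, i ∈ sets j) :
    (∀ (O : Finset ℕ) (serve : Fin n → ℕ), O ⊆ Finset.Icc 1 (m + n) →
      (∀ i, serve i ∈ O) →
      ∃ F : Finset (Fin m), (∀ i : Fin n, ∃ j ∈ F, i ∈ sets j) ∧
        (F.card : ℝ≥0∞) ≤ scLotCost n m sets O serve) ∧
    (∀ F : Finset (Fin m), (∀ i : Fin n, ∃ j ∈ F, i ∈ sets j) →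
      ∃ (O : Finset ℕ) (serve : Fin n → ℕ), O ⊆ Finset.Icc 1 (m + n) ∧
        (∀ i, serve i ∈ O) ∧ scLotCost n m sets O serve ≤ (F.card : ℝ≥0∞)) ∧
    sInf {c : ℝ≥0∞ | ∃ (O : Finset ℕ) (serve : Fin n → ℕ),
        O ⊆ Finset.Icc 1 (m + n) ∧ (∀ i, serve i ∈ O) ∧
        c = scLotCost n m sets O serve} =
      sInf {c : ℝ≥0∞ | ∃ F : Finset (Fin m),
        (∀ i : Fin n, ∃ j ∈ F, i ∈ sets j) ∧ c = (F.card : ℝ≥0∞)} := by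
  refine ⟨fun O serve _ hfe => scPartA n m sets hcov O serve hfe,
    fun F hF => scPartB n m sets F hF, le_antisymm ?_ ?_⟩
  · apply le_sInf
    rintro c ⟨F, hF, rfl⟩
    obtain ⟨O, serve, hO, hfe, hle⟩ := scPartB n m sets F hF
    exact le_trans (sInf_le ⟨O, serve, hO, hfe, rfl⟩) hle
  · apply le_sInf
    rintro c ⟨O, serve, hO, hfe, rfl⟩
    obtain ⟨F, hF, hle⟩ := scPartA n m sets hcov O serve hfe
    exact le_trans (sInf_le ⟨F, hF, rfl⟩) hle
end
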